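/- arXiv:2204.08181 — 6 statements merged into one kernel-verified Lean document; each statement's English description precedes it below -/
import Mathlib

section
/- For all y ∈ ℝ the following weighted bounds hold: |\overline{W}(y)| ≤ η(y)^{1/6}; −η(y)^{−1/3} ≤ \overline{W}'(y) ≤ −(1/6)η(y)^{−1/3}; and |\overline{W}''(y)| ≤ 2 η(y)^{−5/6}. -/
/-!
Cardano's formula says that `w = W̄(y)` is the real root of `w³ + w + y = 0`, so `W̄` inverts
`w ↦ -(w³ + w)`. Hence `W̄' = -1/(3w² + 1)`, `W̄'' = -6w/(3w² + 1)³` and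
`η = 1 + (w³ + w)²`.
Writing `e = η^{1/6}`, every bound becomes a polynomial inequality between `w` and `e`;
after raising both sides to a suitable power these are elementary, the sharpest step using
`e² ≤ 1 + w²`, i.e. `1 + (w³ + w)² ≤ (1 + w²)³`.
-/

/-- The steady profile `W̄(y) = (−y/2+(1/27+y²/4)^{1/2})^{1/3} − (y/2+(1/27+y²/4)^{1/2})^{1/3}`. -/
noncomputable def barW (y : ℝ) : ℝ :=
  (-y / 2 + Real.sqrt (1 / 27 + y ^ 2 / 4)) ^ ((1 : ℝ) / 3) -
    (y / 2 + Real.sqrt (1 / 27 + y ^ 2 / 4)) ^ ((1 : ℝ) / 3)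

open Real

lemma half_add_sqrt_pos (y : ℝ) : 0 < y / 2 + √(1 / 27 + y ^ 2 / 4) := by
  have : |y / 2| < √(1 / 27 + y ^ 2 / 4) := by
    rw [← sqrt_sq_eq_abs]
    exact sqrt_lt_sqrt (sq_nonneg _) (by linarith [show (y / 2) ^ 2 = y ^ 2 / 4 by ring])
  linarith [neg_abs_le (y / 2)]

theorem barW_cubic (y : ℝ) : barW y ^ 3 + barW y + y = 0 := by
  have ha : 0 < -y / 2 + √(1 / 27 + y ^ 2 / 4) := by
    simpa only [neg_sq] using half_add_sqrt_pos (-y)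
  have hb : 0 < y / 2 + √(1 / 27 + y ^ 2 / 4) := half_add_sqrt_pos y
  set s := √(1 / 27 + y ^ 2 / 4)
  have hA : ((-y / 2 + s) ^ ((1 : ℝ) / 3)) ^ 3 = -y / 2 + s := by
    simpa using rpow_inv_natCast_pow ha.le three_ne_zero
  have hB : ((y / 2 + s) ^ ((1 : ℝ) / 3)) ^ 3 = y / 2 + s := by
    simpa using rpow_inv_natCast_pow hb.le three_ne_zero
  have hAB : (-y / 2 + s) ^ ((1 : ℝ) / 3) * (y / 2 + s) ^ ((1 : ℝ) / 3) = 1 / 3 := by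
    have hs : s ^ 2 = 1 / 27 + y ^ 2 / 4 := sq_sqrt (by positivity)
    rw [← mul_rpow ha.le hb.le, show (-y / 2 + s) * (y / 2 + s) = (1 / 3) ^ 3 by
      linear_combination hs]
    simpa using pow_rpow_inv_natCast (by norm_num : (0 : ℝ) ≤ 1 / 3) three_ne_zero
  set A := (-y / 2 + s) ^ ((1 : ℝ) / 3)
  set B := (y / 2 + s) ^ ((1 : ℝ) / 3)
  change (A - B) ^ 3 + (A - B) + y = 0
  linear_combination hA - hB - 3 * (A - B) * hAB

theorem continuous_barW : Continuous barW := by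
  unfold barW
  fun_prop (disch := norm_num)

theorem hasDerivAt_barW (y : ℝ) : HasDerivAt barW (-(3 * barW y ^ 2 + 1)⁻¹) y := by
  have hg : HasDerivAt (fun w : ℝ => -(w ^ 3 + w)) (-(3 * barW y ^ 2 + 1)) (barW y) :=
    (((hasDerivAt_pow 3 (barW y)).add (hasDerivAt_id' (barW y))).neg).congr_deriv (by ring)
  rw [← inv_neg]
  refine hg.of_local_left_inverse continuous_barW.continuousAt (neg_ne_zero.2 (by positivity)) ?_
  exact Filter.Eventually.of_forall fun z => by linarith [barW_cubic z]

theorem iteratedDeriv_two_barW (y : ℝ) :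
    iteratedDeriv 2 barW y = -6 * barW y / (3 * barW y ^ 2 + 1) ^ 3 := by
  have hderiv : deriv barW = fun y => -(3 * barW y ^ 2 + 1)⁻¹ :=
    funext fun y => (hasDerivAt_barW y).deriv
  have hP : 3 * barW y ^ 2 + 1 ≠ 0 := by positivity
  have h : HasDerivAt (fun y => -(3 * barW y ^ 2 + 1)⁻¹)
      (-6 * barW y / (3 * barW y ^ 2 + 1) ^ 3) y := by
    refine ((((hasDerivAt_barW y).fun_pow 2).const_mul 3).add_const 1).inv hP
      |>.fun_neg.congr_deriv ?_
    field_simp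
    ring
  rw [iteratedDeriv_succ, iteratedDeriv_one, hderiv, h.deriv]

section SixthRoot

variable {w e : ℝ}

theorem abs_le_of_pow_six_eq (he : 0 ≤ e) (h : e ^ 6 = 1 + (w ^ 3 + w) ^ 2) : |w| ≤ e := by
  refine (pow_le_pow_iff_left₀ (abs_nonneg w) he (n := 6) (by norm_num)).1 ?_
  rw [h, Even.pow_abs (by decide)]
  nlinarith [sq_nonneg w, sq_nonneg (w ^ 2)]

theorem sq_le_one_add_sq_of_pow_six_eq (h : e ^ 6 = 1 + (w ^ 3 + w) ^ 2) :
    e ^ 2 ≤ 1 + w ^ 2 := by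
  refine (pow_le_pow_iff_left₀ (by positivity) (by positivity) (n := 3) (by norm_num)).1 ?_
  rw [← pow_mul, h]
  nlinarith [sq_nonneg w, sq_nonneg (w ^ 2)]

theorem three_mul_sq_add_one_le_of_pow_six_eq (h : e ^ 6 = 1 + (w ^ 3 + w) ^ 2) :
    3 * w ^ 2 + 1 ≤ 6 * e ^ 2 := by
  refine (pow_le_pow_iff_left₀ (by positivity) (by positivity) (n := 3) (by norm_num)).1 ?_
  rw [mul_pow, ← pow_mul, h]
  nlinarith [sq_nonneg w, sq_nonneg (w ^ 2), sq_nonneg (w ^ 3)]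

lemma nine_mul_one_add_pow_five_le {t : ℝ} (ht : 0 ≤ t) :
    9 * t * (1 + t) ^ 5 ≤ (1 + 3 * t) ^ 6 := by
  have key : 0 ≤ 1 + 9 * t + 90 * t ^ 2 + 450 * t ^ 3 + 1125 * t ^ 4 + 1413 * t ^ 5 +
      720 * t ^ 6 := by positivity
  linear_combination key

theorem three_mul_abs_mul_pow_five_le_of_pow_six_eq (he : 0 ≤ e)
    (h : e ^ 6 = 1 + (w ^ 3 + w) ^ 2) : 3 * |w| * e ^ 5 ≤ (3 * w ^ 2 + 1) ^ 3 := by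
  refine (pow_le_pow_iff_left₀ (by positivity) (by positivity) (n := 2) (by norm_num)).1 ?_
  have he2 := sq_le_one_add_sq_of_pow_six_eq h
  calc (3 * |w| * e ^ 5) ^ 2 = 9 * w ^ 2 * (e ^ 2) ^ 5 := by rw [← sq_abs w]; ring
    _ ≤ 9 * w ^ 2 * (1 + w ^ 2) ^ 5 := by gcongr
    _ ≤ (1 + 3 * w ^ 2) ^ 6 := nine_mul_one_add_pow_five_le (sq_nonneg w)
    _ = ((3 * w ^ 2 + 1) ^ 3) ^ 2 := by ring

theorem profile_bounds_of_pow_six_eq (he : 0 < e) (h : e ^ 6 = 1 + (w ^ 3 + w) ^ 2) :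
    |w| ≤ e ∧ -(e ^ 2)⁻¹ ≤ -(3 * w ^ 2 + 1)⁻¹ ∧
      -(3 * w ^ 2 + 1)⁻¹ ≤ -(1 / 6) * (e ^ 2)⁻¹ ∧
      |-6 * w / (3 * w ^ 2 + 1) ^ 3| ≤ 2 * (e ^ 5)⁻¹ := by
  refine ⟨abs_le_of_pow_six_eq he.le h, ?_, ?_, ?_⟩
  · have he2 : e ^ 2 ≤ 3 * w ^ 2 + 1 := by
      linarith [sq_le_one_add_sq_of_pow_six_eq h, sq_nonneg w]
    exact neg_le_neg (inv_anti₀ (by positivity) he2)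
  · rw [neg_mul, one_div, ← mul_inv]
    exact neg_le_neg (inv_anti₀ (by positivity) (three_mul_sq_add_one_le_of_pow_six_eq h))
  · have hP : 0 < (3 * w ^ 2 + 1) ^ 3 := by positivity
    rw [abs_div, abs_mul, abs_of_pos hP, ← div_eq_mul_inv, div_le_div_iff₀ hP (by positivity)]
    norm_num
    linarith [three_mul_abs_mul_pow_five_le_of_pow_six_eq he.le h]

end SixthRoot

/-- Weighted bounds for `W̄` and its first two derivatives, with weight `η(y) = 1 + y²`:
`|W̄| ≤ η^{1/6}`, `−η^{−1/3} ≤ W̄' ≤ −(1/6)η^{−1/3}`, `|W̄''| ≤ 2η^{−5/6}`. -/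
theorem stmt_6 (y : ℝ) :
    |barW y| ≤ (1 + y ^ 2) ^ ((1 : ℝ) / 6) ∧
    -(1 + y ^ 2) ^ (-(1 : ℝ) / 3) ≤ deriv barW y ∧
    deriv barW y ≤ -(1 / 6) * (1 + y ^ 2) ^ (-(1 : ℝ) / 3) ∧
    |iteratedDeriv 2 barW y| ≤ 2 * (1 + y ^ 2) ^ (-(5 : ℝ) / 6) := by
  have hη : 0 ≤ 1 + y ^ 2 := by positivity
  have he6 : ((1 + y ^ 2) ^ ((1 : ℝ) / 6)) ^ 6 = 1 + (barW y ^ 3 + barW y) ^ 2 := by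
    rw [show (1 : ℝ) / 6 = ((6 : ℕ) : ℝ)⁻¹ by norm_num,
      rpow_inv_natCast_pow hη (by norm_num)]
    linear_combination (y - (barW y ^ 3 + barW y)) * barW_cubic y
  rw [show -(1 : ℝ) / 3 = -(1 / 6 * (2 : ℕ)) by norm_num,
    show -(5 : ℝ) / 6 = -(1 / 6 * (5 : ℕ)) by norm_num, rpow_neg hη, rpow_neg hη,
    rpow_mul_natCast hη, rpow_mul_natCast hη, (hasDerivAt_barW y).deriv, iteratedDeriv_two_barW]
  exact profile_bounds_of_pow_six_eq (by positivity) he6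
end

section
/- Let M ≥ 2, ε ∈ (0,1) with 2M^{12}ε² ≤ 1, set ℓ = M^{−4}, and let ζ₀ ≥ log(1/ε). Suppose y : [ζ₀,∞) → ℝ is differentiable and satisfies y'(ζ) = (3/2)y(ζ) + G(ζ), where G : [ζ₀,∞) → ℝ satisfies |G(ζ)| ≤ (1/4)|y(ζ)| + M² e^{−ζ} for all ζ ≥ ζ₀. Then: (i) if |y(ζ₀)| ≥ ℓ, then |y(ζ)| ≥ |y(ζ₀)| e^{(ζ−ζ₀)/2} for all ζ ≥ ζ₀; (ii) consequently, if |y(s)| ≤ ℓ for some s ≥ ζ₀, then |y(ζ)| ≤ ℓ for all ζ₀ ≤ ζ ≤ s. -/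
/-!
Along a trajectory the square `z = y²` satisfies `z' = 3y² + 2yG ≥ (5/2)y² - 2M²e^{-ζ}|y|`.
Since `e^{-ζ} ≤ ε` for `ζ ≥ ζ₀` and `2M¹²ε² ≤ 1` forces `4M²ε < 3ℓ`, the forcing term is
dominated as soon as `|y| ≥ ℓ`, and then `z' > z`. A barrier argument against
`z(ζ₁)e^{ζ-ζ₁}` shows that once `|y| ≥ ℓ` it stays there and grows like `e^{ζ/2}`; part (ii)
is the contrapositive of this growth, started from `ζ` instead of `ζ₀`.
-/

open Set Real

lemma sq_lt_two_mul_mul_drift {u g ℓ δ : ℝ} (hℓ : 0 < ℓ) (hu : ℓ ≤ |u|)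
    (hg : |g| ≤ |u| / 4 + δ) (hδ : 4 * δ < 3 * ℓ) : u ^ 2 < 2 * u * (3 / 2 * u + g) := by
  have hug : -(|u| * |g|) ≤ u * g := by rw [← abs_mul]; exact neg_abs_le _
  nlinarith [sq_abs u, mul_le_mul_of_nonneg_left hg (abs_nonneg u),
    mul_lt_mul_of_pos_right hδ (hℓ.trans_le hu), mul_le_mul_of_nonneg_right hu (abs_nonneg u)]

theorem mul_exp_sub_le_of_lt_deriv {z z' : ℝ → ℝ} {a b : ℝ} (hab : a ≤ b)
    (hz : ContinuousOn z (Icc a b)) (hz' : ∀ x ∈ Ico a b, HasDerivWithinAt z (z' x) (Ici x) x)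
    (hgrowth : ∀ x ∈ Ico a b, z x = z a * exp (x - a) → z x < z' x) :
    z a * exp (b - a) ≤ z b := by
  have hbarrier (x : ℝ) :
      HasDerivWithinAt (fun t => z a * exp (t - a)) (z a * exp (x - a)) (Ici x) x :=
    (((hasDerivAt_id x).sub_const a).exp.const_mul (z a)).hasDerivWithinAt.congr_deriv
      (by simp)
  refine image_le_of_deriv_right_lt_deriv_boundary' (by fun_prop) (fun x _ => hbarrier x)
    (by simp) hz hz' (fun x hx hzx => ?_) ⟨hab, le_rfl⟩
  rw [hzx]
  exact hgrowth x hx hzx.symm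

theorem abs_mul_exp_half_sub_le_abs {y G : ℝ → ℝ} {a ℓ δ : ℝ} (hℓ : 0 < ℓ)
    (hδ : 4 * δ < 3 * ℓ) (hy : ∀ x ∈ Ici a, HasDerivWithinAt y (3 / 2 * y x + G x) (Ici a) x)
    (hG : ∀ x ∈ Ici a, |G x| ≤ |y x| / 4 + δ) {ζ₁ ζ : ℝ} (hζ₁ : a ≤ ζ₁)
    (hyζ₁ : ℓ ≤ |y ζ₁|) (hζ : ζ₁ ≤ ζ) :
    |y ζ₁| * exp ((ζ - ζ₁) / 2) ≤ |y ζ| := by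
  have hsub : Icc ζ₁ ζ ⊆ Ici a := fun x hx => hζ₁.trans hx.1
  have hsq : y ζ₁ ^ 2 * exp (ζ - ζ₁) ≤ y ζ ^ 2 := by
    refine mul_exp_sub_le_of_lt_deriv (z := fun x => y x ^ 2)
      (z' := fun x => 2 * y x * (3 / 2 * y x + G x)) hζ
      (ContinuousOn.pow (fun x hx => (hy x (hsub hx)).continuousWithinAt.mono hsub) 2)
      (fun x hx => ?_) (fun x hx hyx => ?_)
    · have hxa : a ≤ x := hζ₁.trans hx.1
      exact (((hy x hxa).mono (Ici_subset_Ici.mpr hxa)).fun_pow 2).congr_deriv (by ring)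
    · have hyx : ℓ ≤ |y x| := by
        rw [← sq_le_sq₀ hℓ.le (abs_nonneg _), sq_abs, hyx]
        have : ℓ ^ 2 ≤ y ζ₁ ^ 2 := by
          rw [← sq_abs (y ζ₁)]; exact pow_le_pow_left₀ hℓ.le hyζ₁ 2
        nlinarith [one_le_exp (sub_nonneg.mpr hx.1), sq_nonneg (y ζ₁)]
      exact sq_lt_two_mul_mul_drift hℓ hyx (hG x (hζ₁.trans hx.1)) hδ
  rw [← sq_le_sq₀ (by positivity) (abs_nonneg _), mul_pow, sq_abs, sq_abs, ← exp_nat_mul,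
    Nat.cast_ofNat, mul_div_cancel₀ _ two_ne_zero]
  exact hsq

theorem stmt_7_general (M ε ℓ ζ₀ : ℝ) (hM : 2 ≤ M) (hε0 : 0 < ε)
    (hMε : 2 * M ^ 12 * ε ^ 2 ≤ 1) (hℓ : ℓ = 1 / M ^ 4)
    (hζ₀ : Real.log (1 / ε) ≤ ζ₀)
    (y G : ℝ → ℝ)
    (hy : ∀ ζ ∈ Set.Ici ζ₀,
      HasDerivWithinAt y ((3 / 2) * y ζ + G ζ) (Set.Ici ζ₀) ζ)
    (hG : ∀ ζ ∈ Set.Ici ζ₀, |G ζ| ≤ (1 / 4) * |y ζ| + M ^ 2 * Real.exp (-ζ)) :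
    (ℓ ≤ |y ζ₀| → ∀ ζ ∈ Set.Ici ζ₀, |y ζ₀| * Real.exp ((ζ - ζ₀) / 2) ≤ |y ζ|) ∧
    (∀ s ∈ Set.Ici ζ₀, |y s| ≤ ℓ → ∀ ζ, ζ₀ ≤ ζ → ζ ≤ s → |y ζ| ≤ ℓ) := by
  have hM4 : 0 < M ^ 4 := pow_pos (by linarith) 4
  have hℓ0 : 0 < ℓ := hℓ ▸ one_div_pos.mpr hM4
  have hδ : 4 * (M ^ 2 * ε) < 3 * ℓ := by
    rw [hℓ, mul_one_div, lt_div_iff₀ hM4]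
    nlinarith [sq_nonneg (M ^ 6 * ε)]
  have hG' : ∀ x ∈ Ici ζ₀, |G x| ≤ |y x| / 4 + M ^ 2 * ε := fun x hx => by
    have hexp : exp (-x) ≤ ε := by
      rw [← le_log_iff_exp_le hε0]
      rw [one_div, log_inv] at hζ₀
      linarith [mem_Ici.mp hx]
    linarith [hG x hx, mul_le_mul_of_nonneg_left hexp (sq_nonneg M)]
  have growth := @abs_mul_exp_half_sub_le_abs y G ζ₀ ℓ _ hℓ0 hδ hy hG'
  refine ⟨fun h ζ hζ => growth le_rfl h hζ, fun s _ hys ζ hζ₀ζ hζs => ?_⟩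
  by_contra! hyζ
  nlinarith [growth hζ₀ζ hyζ.le hζs, one_le_exp (div_nonneg (sub_nonneg.mpr hζs) two_pos.le)]

/-- ODE form of Proposition 5.1: along a trajectory solving `y' = (3/2)y + G` with
`|G(ζ)| ≤ (1/4)|y(ζ)| + M²e^{−ζ}` on `[ζ₀,∞)` where `ζ₀ ≥ log(1/ε)`, with `ℓ = M⁻⁴`:
(i) if `|y(ζ₀)| ≥ ℓ` then `|y(ζ)| ≥ |y(ζ₀)|e^{(ζ−ζ₀)/2}` for all `ζ ≥ ζ₀`;
(ii) consequently if `|y(s)| ≤ ℓ` for some `s ≥ ζ₀`, then `|y(ζ)| ≤ ℓ` for `ζ₀ ≤ ζ ≤ s`. -/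
theorem stmt_7 (M ε ℓ ζ₀ : ℝ) (hM : 2 ≤ M) (hε0 : 0 < ε) (hε1 : ε < 1)
    (hMε : 2 * M ^ 12 * ε ^ 2 ≤ 1) (hℓ : ℓ = 1 / M ^ 4)
    (hζ₀ : Real.log (1 / ε) ≤ ζ₀)
    (y G : ℝ → ℝ)
    (hy : ∀ ζ ∈ Set.Ici ζ₀,
      HasDerivWithinAt y ((3 / 2) * y ζ + G ζ) (Set.Ici ζ₀) ζ)
    (hG : ∀ ζ ∈ Set.Ici ζ₀, |G ζ| ≤ (1 / 4) * |y ζ| + M ^ 2 * Real.exp (-ζ)) :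
    (ℓ ≤ |y ζ₀| → ∀ ζ ∈ Set.Ici ζ₀, |y ζ₀| * Real.exp ((ζ - ζ₀) / 2) ≤ |y ζ|) ∧
    (∀ s ∈ Set.Ici ζ₀, |y s| ≤ ℓ → ∀ ζ, ζ₀ ≤ ζ → ζ ≤ s → |y ζ| ≤ ℓ) :=
  stmt_7_general M ε ℓ ζ₀ hM hε0 hMε hℓ hζ₀ y G hy hG
end

section
/- Let a > 0, ζ₀ ∈ ℝ, and let h : [ζ₀,∞) → ℝ be continuous with |h(ζ) − a| ≤ a/2 for all ζ ≥ ζ₀. Let y : [ζ₀,∞) → ℝ solve y'(ζ) = (3/2)y(ζ) + e^{ζ/2}h(ζ) with y(ζ₀) = y₀. Then: (Case 1) if y₀ < −4a e^{ζ₀/2}, then y(ζ) ≤ −a e^{(3/2)ζ − ζ₀} < 0 for all ζ ≥ ζ₀; (Case 2) if −(a/4)e^{ζ₀/2} ≤ y₀ ≤ 0, then there exists ζ* ≥ ζ₀ with y(ζ*) = 0 such that −(3/2)a(e^{−ζ} − e^{−ζ*})e^{(3/2)ζ} ≤ y(ζ) ≤ −(a/2)(e^{−ζ} − e^{−ζ*})e^{(3/2)ζ}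 ≤ 0 for ζ₀ ≤ ζ ≤ ζ*, and y(ζ) ≥ (a/2)(e^{−ζ*} − e^{−ζ})e^{(3/2)ζ} ≥ 0 for ζ ≥ ζ*; (Case 3) if y₀ ≥ 0, then y(ζ) ≥ (a/2)(e^{−ζ₀} − e^{−ζ})e^{(3/2)ζ} ≥ 0 for all ζ ≥ ζ₀. -/
/-!
The quantity `G(ζ) = y(ζ) e^{-3ζ/2}` satisfies `G' = e^{-ζ} h`, so `a/2 ≤ h ≤ 3a/2` pinches every
increment `G t - G s` between `a/2` and `3a/2` times `e^{-s} - e^{-t}`. All three cases are read off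
from the sign of `G` at one point: at `ζ₀` in Cases 1 and 3, and at a zero `ζ*` in Case 2, which
exists by the intermediate value theorem because the growth `a/4 e^{-ζ₀}` of `G` on
`[ζ₀, ζ₀ + log 2]` compensates `G(ζ₀) ≥ -(a/4) e^{-ζ₀}`.
-/

open Real Set

lemma exp_half_mul_exp_neg_three_halves_mul (x : ℝ) :
    exp (x / 2) * exp (-(3 / 2 * x)) = exp (-x) := by
  rw [← exp_add]; ring_nf

lemma le_mul_exp_neg_iff {c u x : ℝ} : c ≤ u * exp (-x) ↔ c * exp x ≤ u := by
  rw [exp_neg, ← div_eq_mul_inv, le_div_iff₀ (exp_pos x)]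

lemma mul_exp_neg_le_iff {c u x : ℝ} : u * exp (-x) ≤ c ↔ u ≤ c * exp x := by
  rw [exp_neg, ← div_eq_mul_inv, div_le_iff₀ (exp_pos x)]

lemma Convex.add_mul_sub_exp_neg_le {D : Set ℝ} (hD : Convex ℝ D) {G k : ℝ → ℝ} {c : ℝ}
    (hG : ∀ x ∈ D, HasDerivWithinAt G (exp (-x) * k x) D x) (hk : ∀ x ∈ D, c ≤ k x)
    {s t : ℝ} (hs : s ∈ D) (ht : t ∈ D) (hst : s ≤ t) :
    G s + c * (exp (-s) - exp (-t)) ≤ G t := by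
  have hexp : ∀ x, HasDerivAt (fun x => c * exp (-x)) (c * (exp (-x) * -1)) x :=
    fun x => ((hasDerivAt_neg x).exp).const_mul c
  have hmono : MonotoneOn (fun x => G x + c * exp (-x)) D := by
    refine monotoneOn_of_hasDerivWithinAt_nonneg hD
      (f' := fun x => exp (-x) * k x + c * (exp (-x) * -1)) ?_ (fun x hx => ?_) (fun x hx => ?_)
    · exact ContinuousOn.add (f := G) (fun x hx => (hG x hx).continuousWithinAt) (by fun_prop)
    · exact ((hG x (interior_subset hx)).mono interior_subset).add (hexp x).hasDerivWithinAt
    · nlinarith [hk x (interior_subset hx), exp_pos (-x)]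
  have := hmono hs ht hst
  simp only at this
  linarith

lemma hasDerivWithinAt_mul_exp_neg_three_halves_mul {y h : ℝ → ℝ} {s : Set ℝ} {ζ : ℝ}
    (hy : HasDerivWithinAt y (3 / 2 * y ζ + exp (ζ / 2) * h ζ) s ζ) :
    HasDerivWithinAt (fun ζ => y ζ * exp (-(3 / 2 * ζ))) (exp (-ζ) * h ζ) s ζ := by
  have he : HasDerivAt (fun ζ => exp (-(3 / 2 * ζ))) (exp (-(3 / 2 * ζ)) * -(3 / 2 * 1)) ζ :=
    ((hasDerivAt_id ζ).const_mul (3 / 2)).neg.exp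
  refine (hy.mul he.hasDerivWithinAt).congr_deriv ?_
  rw [← exp_half_mul_exp_neg_three_halves_mul ζ]
  ring

/-- The increment form of `y e^{-3ζ/2} = y₀ e^{-3ζ₀/2} + ∫ e^{-α} h(α) dα` with `a/2 ≤ h ≤ 3a/2`. -/
def CharacteristicBounds (a ζ₀ : ℝ) (y : ℝ → ℝ) : Prop :=
  ∀ s t, ζ₀ ≤ s → s ≤ t →
    y s * exp (-(3 / 2 * s)) + a / 2 * (exp (-s) - exp (-t)) ≤ y t * exp (-(3 / 2 * t)) ∧
    y t * exp (-(3 / 2 * t)) ≤ y s * exp (-(3 / 2 * s)) + 3 * a / 2 * (exp (-s) - exp (-t))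

lemma characteristicBounds_of_hasDerivWithinAt {a ζ₀ : ℝ} {h y : ℝ → ℝ}
    (hh : ∀ ζ ∈ Ici ζ₀, |h ζ - a| ≤ a / 2)
    (hy : ∀ ζ ∈ Ici ζ₀,
      HasDerivWithinAt y (3 / 2 * y ζ + exp (ζ / 2) * h ζ) (Ici ζ₀) ζ) :
    CharacteristicBounds a ζ₀ y := by
  intro s t hs hst
  have hG := fun ζ hζ => hasDerivWithinAt_mul_exp_neg_three_halves_mul (hy ζ hζ)
  have ht : t ∈ Ici ζ₀ := hs.trans hst
  constructor
  · exact (convex_Ici ζ₀).add_mul_sub_exp_neg_le hG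
      (fun x hx => by linarith [(abs_le.mp (hh x hx)).1]) hs ht hst
  · -- the upper bound is the lower bound for `-G`, whose rate is `-h ≥ -3a/2`
    have := (convex_Ici ζ₀).add_mul_sub_exp_neg_le (G := fun x => -(y x * exp (-(3 / 2 * x))))
      (k := fun x => -h x) (c := -(3 * a / 2))
      (fun x hx => by simpa only [mul_neg] using (hG x hx).fun_neg)
      (fun x hx => by linarith [(abs_le.mp (hh x hx)).2]) hs ht hst
    linarith

namespace CharacteristicBounds

variable {a ζ₀ : ℝ} {y : ℝ → ℝ}

theorem le_neg_mul_exp (hy : CharacteristicBounds a ζ₀ y) (ha : 0 < a)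
    (hy₀ : y ζ₀ < -4 * a * exp (ζ₀ / 2)) {ζ : ℝ} (hζ : ζ₀ ≤ ζ) :
    y ζ ≤ -a * exp (3 / 2 * ζ - ζ₀) ∧ y ζ < 0 := by
  have h₀ : y ζ₀ * exp (-(3 / 2 * ζ₀)) < -4 * a * exp (-ζ₀) := by
    rw [← exp_half_mul_exp_neg_three_halves_mul ζ₀, ← mul_assoc]
    exact mul_lt_mul_of_pos_right hy₀ (exp_pos _)
  have hG : y ζ * exp (-(3 / 2 * ζ)) ≤ -a * exp (-ζ₀) := by
    linarith [(hy ζ₀ ζ le_rfl hζ).2, mul_pos ha (exp_pos (-ζ)), mul_pos ha (exp_pos (-ζ₀))]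
  have hle : y ζ ≤ -a * exp (3 / 2 * ζ - ζ₀) := by
    calc y ζ ≤ -a * exp (-ζ₀) * exp (3 / 2 * ζ) := mul_exp_neg_le_iff.mp hG
      _ = -a * exp (3 / 2 * ζ - ζ₀) := by rw [mul_assoc, ← exp_add]; ring_nf
  exact ⟨hle, hle.trans_lt (by nlinarith [exp_pos (3 / 2 * ζ - ζ₀)])⟩

theorem exists_eq_zero (hy : CharacteristicBounds a ζ₀ y) (hcont : ContinuousOn y (Ici ζ₀))
    (hy₀ : -(a / 4) * exp (ζ₀ / 2) ≤ y ζ₀) (hy₀' : y ζ₀ ≤ 0) :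
    ∃ ζs, ζ₀ ≤ ζs ∧ y ζs = 0 := by
  have hZ : ζ₀ ≤ ζ₀ + log 2 := le_add_of_nonneg_right (log_nonneg one_le_two)
  have hexpZ : exp (-(ζ₀ + log 2)) = exp (-ζ₀) / 2 := by
    rw [neg_add, exp_add, exp_neg (log 2), exp_log two_pos, div_eq_mul_inv]
  have h₀ : -(a / 4) * exp (-ζ₀) ≤ y ζ₀ * exp (-(3 / 2 * ζ₀)) := by
    rw [← exp_half_mul_exp_neg_three_halves_mul ζ₀, ← mul_assoc]
    exact mul_le_mul_of_nonneg_right hy₀ (exp_pos _).le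
  have hyZ : 0 ≤ y (ζ₀ + log 2) := by
    have := (hy ζ₀ _ le_rfl hZ).1
    rw [hexpZ] at this
    simpa only [zero_mul] using le_mul_exp_neg_iff (c := 0) |>.mp (by linarith)
  obtain ⟨ζs, hmem, hzero⟩ :=
    intermediate_value_Icc hZ (hcont.mono Icc_subset_Ici_self) ⟨hy₀', hyZ⟩
  exact ⟨ζs, hmem.1, hzero⟩

theorem bounds_of_le_of_eq_zero (hy : CharacteristicBounds a ζ₀ y) (ha : 0 < a) {ζ ζs : ℝ}
    (hζ : ζ₀ ≤ ζ) (hζs : ζ ≤ ζs) (hzero : y ζs = 0) :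
    -(3 / 2) * a * (exp (-ζ) - exp (-ζs)) * exp (3 / 2 * ζ) ≤ y ζ ∧
      y ζ ≤ -(a / 2) * (exp (-ζ) - exp (-ζs)) * exp (3 / 2 * ζ) ∧ y ζ ≤ 0 := by
  obtain ⟨hlow, hup⟩ := hy ζ ζs hζ hζs
  rw [hzero, zero_mul] at hlow hup
  have hle : y ζ ≤ -(a / 2) * (exp (-ζ) - exp (-ζs)) * exp (3 / 2 * ζ) :=
    mul_exp_neg_le_iff.mp (by linarith)
  refine ⟨le_mul_exp_neg_iff.mp (by linarith), hle, hle.trans ?_⟩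
  have hexp : exp (-ζs) ≤ exp (-ζ) := exp_le_exp.mpr (neg_le_neg hζs)
  exact mul_nonpos_of_nonpos_of_nonneg
    (mul_nonpos_of_nonpos_of_nonneg (by linarith) (sub_nonneg.mpr hexp)) (exp_pos _).le

theorem le_of_nonneg (hy : CharacteristicBounds a ζ₀ y) (ha : 0 < a) {s ζ : ℝ}
    (hs : ζ₀ ≤ s) (hys : 0 ≤ y s) (hsζ : s ≤ ζ) :
    a / 2 * (exp (-s) - exp (-ζ)) * exp (3 / 2 * ζ) ≤ y ζ ∧ 0 ≤ y ζ := by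
  have h₀ : 0 ≤ y s * exp (-(3 / 2 * s)) := mul_nonneg hys (exp_pos _).le
  have hle : a / 2 * (exp (-s) - exp (-ζ)) * exp (3 / 2 * ζ) ≤ y ζ :=
    le_mul_exp_neg_iff.mp (by linarith [(hy s ζ hs hsζ).1])
  have hexp : exp (-ζ) ≤ exp (-s) := exp_le_exp.mpr (neg_le_neg hsζ)
  exact ⟨hle, le_trans (mul_nonneg (mul_nonneg (by positivity) (sub_nonneg.mpr hexp))
    (exp_pos _).le) hle⟩

end CharacteristicBounds

theorem stmt_8_general (a ζ₀ y₀ : ℝ) (ha : 0 < a)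
    (h y : ℝ → ℝ)
    (hh : ∀ ζ ∈ Set.Ici ζ₀, |h ζ - a| ≤ a / 2)
    (hy : ∀ ζ ∈ Set.Ici ζ₀,
      HasDerivWithinAt y ((3 / 2) * y ζ + Real.exp (ζ / 2) * h ζ) (Set.Ici ζ₀) ζ)
    (hy0 : y ζ₀ = y₀) :
    -- Case 1
    (y₀ < -4 * a * Real.exp (ζ₀ / 2) →
      ∀ ζ ∈ Set.Ici ζ₀, y ζ ≤ -a * Real.exp ((3 / 2) * ζ - ζ₀) ∧ y ζ < 0) ∧
    -- Case 2
    (-(a / 4) * Real.exp (ζ₀ / 2) ≤ y₀ → y₀ ≤ 0 →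
      ∃ ζs, ζ₀ ≤ ζs ∧ y ζs = 0 ∧
        (∀ ζ, ζ₀ ≤ ζ → ζ ≤ ζs →
          -(3 / 2) * a * (Real.exp (-ζ) - Real.exp (-ζs)) * Real.exp ((3 / 2) * ζ) ≤ y ζ ∧
          y ζ ≤ -(a / 2) * (Real.exp (-ζ) - Real.exp (-ζs)) * Real.exp ((3 / 2) * ζ) ∧
          y ζ ≤ 0) ∧
        (∀ ζ, ζs ≤ ζ →
          (a / 2) * (Real.exp (-ζs) - Real.exp (-ζ)) * Real.exp ((3 / 2) * ζ) ≤ y ζ ∧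
          0 ≤ y ζ)) ∧
    -- Case 3
    (0 ≤ y₀ →
      ∀ ζ ∈ Set.Ici ζ₀,
        (a / 2) * (Real.exp (-ζ₀) - Real.exp (-ζ)) * Real.exp ((3 / 2) * ζ) ≤ y ζ ∧
        0 ≤ y ζ) := by
  subst hy0
  have hb : CharacteristicBounds a ζ₀ y := characteristicBounds_of_hasDerivWithinAt hh hy
  refine ⟨fun h₁ ζ hζ => hb.le_neg_mul_exp ha h₁ hζ, fun h₂ h₂' => ?_,
    fun h₃ ζ hζ => hb.le_of_nonneg ha le_rfl h₃ hζ⟩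
  obtain ⟨ζs, hζs, hzero⟩ :=
    hb.exists_eq_zero (fun ζ hζ => (hy ζ hζ).continuousWithinAt) h₂ h₂'
  exact ⟨ζs, hζs, hzero, fun ζ hζ hζζs => hb.bounds_of_le_of_eq_zero ha hζ hζζs hzero,
    fun ζ hζ => hb.le_of_nonneg ha hζs hzero.ge hζ⟩

/-- Lemma 7.1 (Cases 1–3) in self-contained ODE form: forward characteristics
`y' = (3/2)y + e^{ζ/2}h(ζ)` with `a > 0` and `|h − a| ≤ a/2`. -/
theorem stmt_8 (a ζ₀ y₀ : ℝ) (ha : 0 < a)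
    (h y : ℝ → ℝ)
    (hcont : ContinuousOn h (Set.Ici ζ₀))
    (hh : ∀ ζ ∈ Set.Ici ζ₀, |h ζ - a| ≤ a / 2)
    (hy : ∀ ζ ∈ Set.Ici ζ₀,
      HasDerivWithinAt y ((3 / 2) * y ζ + Real.exp (ζ / 2) * h ζ) (Set.Ici ζ₀) ζ)
    (hy0 : y ζ₀ = y₀) :
    -- Case 1
    (y₀ < -4 * a * Real.exp (ζ₀ / 2) →
      ∀ ζ ∈ Set.Ici ζ₀, y ζ ≤ -a * Real.exp ((3 / 2) * ζ - ζ₀) ∧ y ζ < 0) ∧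
    -- Case 2
    (-(a / 4) * Real.exp (ζ₀ / 2) ≤ y₀ → y₀ ≤ 0 →
      ∃ ζs, ζ₀ ≤ ζs ∧ y ζs = 0 ∧
        (∀ ζ, ζ₀ ≤ ζ → ζ ≤ ζs →
          -(3 / 2) * a * (Real.exp (-ζ) - Real.exp (-ζs)) * Real.exp ((3 / 2) * ζ) ≤ y ζ ∧
          y ζ ≤ -(a / 2) * (Real.exp (-ζ) - Real.exp (-ζs)) * Real.exp ((3 / 2) * ζ) ∧
          y ζ ≤ 0) ∧
        (∀ ζ, ζs ≤ ζ →
          (a / 2) * (Real.exp (-ζs) - Real.exp (-ζ)) * Real.exp ((3 / 2) * ζ) ≤ y ζ ∧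
          0 ≤ y ζ)) ∧
    -- Case 3
    (0 ≤ y₀ →
      ∀ ζ ∈ Set.Ici ζ₀,
        (a / 2) * (Real.exp (-ζ₀) - Real.exp (-ζ)) * Real.exp ((3 / 2) * ζ) ≤ y ζ ∧
        0 ≤ y ζ) :=
  stmt_8_general a ζ₀ y₀ ha h y hh hy hy0
end

section
/- Let a < 0, ζ₀ ∈ ℝ, and let h : [ζ₀,∞) → ℝ be continuous with |h(ζ) − a| ≤ |a|/2 for all ζ ≥ ζ₀. Let y : [ζ₀,∞) → ℝ solve y'(ζ) = (3/2)y(ζ) + e^{ζ/2}h(ζ) with y(ζ₀) = y₀. Then: (Case 1) if y₀ > −4a e^{ζ₀/2}, then y(ζ) ≥ −a e^{(3/2)ζ − ζ₀} > 0 for all ζ ≥ ζ₀; (Case 2) if 0 ≤ y₀ ≤ −(a/4)e^{ζ₀/2}, then there exists ζ* ≥ ζ₀ with y(ζ*) = 0 such that 0 ≤ −(a/2)(e^{−ζ} − e^{−ζ*})e^{(3/2)ζ} ≤ y(ζ) ≤ −(3/2)a(e^{−ζ} − e^{−ζ*})e^{(3/2)ζ} for ζ₀ ≤ ζ ≤ ζ*,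 and y(ζ) ≤ (a/2)(e^{−ζ*} − e^{−ζ})e^{(3/2)ζ} ≤ 0 for ζ ≥ ζ*; (Case 3) if y₀ ≤ 0, then y(ζ) ≤ (a/2)(e^{−ζ₀} − e^{−ζ})e^{(3/2)ζ} ≤ 0 for all ζ ≥ ζ₀. -/
/-!
Rescaling `g(ζ) = y(ζ) e^{-3ζ/2}` removes the linear term: `g' = e^{-ζ} h` with `3a/2 ≤ h ≤ a/2`,
so every increment `g(ζ₂) - g(ζ₁)` lies between `3a/2 ⋅ (e^{-ζ₁} - e^{-ζ₂})` and
`a/2 ⋅ (e^{-ζ₁} - e^{-ζ₂})`, both `≤ 0`. A large initial value cannot be used up, since the total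
decrease of `g` is at most `3|a|/2 ⋅ e^{-ζ₀}`; a nonpositive value of `g` only decreases further; and
a small nonnegative initial value is exhausted by `ζ₀ + log 2`, which gives a zero `ζ*` by the
intermediate value theorem, with the two-sided bounds on `[ζ₀, ζ*]` read off from the increments
from `ζ` to `ζ*`.
-/

open Real Set

noncomputable def expRescale (y : ℝ → ℝ) (ζ : ℝ) : ℝ := y ζ * exp (-(3 / 2) * ζ)

section expRescale

variable {y : ℝ → ℝ} {ζ c : ℝ}

lemma expRescale_mul_exp (y : ℝ → ℝ) (ζ : ℝ) : expRescale y ζ * exp ((3 / 2) * ζ) = y ζ := by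
  rw [expRescale, mul_assoc, ← exp_add]
  ring_nf
  rw [exp_zero, mul_one]

lemma expRescale_le_iff : expRescale y ζ ≤ c ↔ y ζ ≤ c * exp ((3 / 2) * ζ) := by
  rw [← mul_le_mul_iff_of_pos_right (exp_pos ((3 / 2) * ζ)), expRescale_mul_exp]

lemma le_expRescale_iff : c ≤ expRescale y ζ ↔ c * exp ((3 / 2) * ζ) ≤ y ζ := by
  rw [← mul_le_mul_iff_of_pos_right (exp_pos ((3 / 2) * ζ)), expRescale_mul_exp]

lemma lt_expRescale_iff : c < expRescale y ζ ↔ c * exp ((3 / 2) * ζ) < y ζ := by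
  rw [← mul_lt_mul_iff_of_pos_right (exp_pos ((3 / 2) * ζ)), expRescale_mul_exp]

lemma exp_div_two_eq_exp_neg_mul_exp (ζ : ℝ) : exp (ζ / 2) = exp (-ζ) * exp ((3 / 2) * ζ) := by
  rw [← exp_add]
  ring_nf

lemma hasDerivWithinAt_expRescale {s : Set ℝ} {v : ℝ}
    (hy : HasDerivWithinAt y ((3 / 2) * y ζ + exp (ζ / 2) * v) s ζ) :
    HasDerivWithinAt (expRescale y) (exp (-ζ) * v) s ζ := by
  have hexp : HasDerivAt (fun x ↦ exp (-(3 / 2) * x)) (exp (-(3 / 2) * ζ) * (-(3 / 2))) ζ :=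
    ((hasDerivAt_id ζ).const_mul _).exp.congr_deriv (by simp)
  have hexp_mul : exp (ζ / 2) * exp (-(3 / 2) * ζ) = exp (-ζ) := by
    rw [← exp_add]
    ring_nf
  exact (hy.mul hexp.hasDerivWithinAt).congr_deriv (by linear_combination v * hexp_mul)

end expRescale

lemma sub_le_of_hasDerivWithinAt_exp_neg_mul {g h : ℝ → ℝ} {s c : ℝ}
    (hg : ∀ x ∈ Ici s, HasDerivWithinAt g (exp (-x) * h x) (Ici s) x)
    (hc : ∀ x ∈ Ici s, h x ≤ c) {x₁ x₂ : ℝ} (hx₁ : s ≤ x₁) (hx₁₂ : x₁ ≤ x₂) :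
    g x₂ - g x₁ ≤ c * (exp (-x₁) - exp (-x₂)) := by
  have hexp (x : ℝ) : HasDerivAt (fun x ↦ -c * exp (-x)) (c * exp (-x)) x :=
    ((hasDerivAt_neg x).exp.const_mul (-c)).congr_deriv (by ring)
  have hmono : MonotoneOn (fun x ↦ -c * exp (-x) - g x) (Ici s) := by
    refine monotoneOn_of_hasDerivWithinAt_nonneg (convex_Ici s)
      (f' := fun x ↦ c * exp (-x) - exp (-x) * h x) ?_ ?_ ?_
    · exact fun x hx ↦ ((hexp x).continuousAt.continuousWithinAt).sub (hg x hx).continuousWithinAt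
    · rw [interior_Ici]
      exact fun x hx ↦ ((hexp x).hasDerivWithinAt.sub (hg x (mem_Ici.2 hx.le))).mono Ioi_subset_Ici_self
    · rw [interior_Ici]
      intro x hx
      have := mul_le_mul_of_nonneg_left (hc x (mem_Ici.2 hx.le)) (exp_pos (-x)).le
      linarith
  have := hmono hx₁ (hx₁.trans hx₁₂) hx₁₂
  simp only at this
  linarith

lemma le_sub_of_hasDerivWithinAt_exp_neg_mul {g h : ℝ → ℝ} {s c : ℝ}
    (hg : ∀ x ∈ Ici s, HasDerivWithinAt g (exp (-x) * h x) (Ici s) x)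
    (hc : ∀ x ∈ Ici s, c ≤ h x) {x₁ x₂ : ℝ} (hx₁ : s ≤ x₁) (hx₁₂ : x₁ ≤ x₂) :
    c * (exp (-x₁) - exp (-x₂)) ≤ g x₂ - g x₁ := by
  have := sub_le_of_hasDerivWithinAt_exp_neg_mul (g := -g) (h := -h) (c := -c)
    (fun x hx ↦ (hg x hx).neg.congr_deriv (by simp)) (fun x hx ↦ neg_le_neg (hc x hx)) hx₁ hx₁₂
  simp only [Pi.neg_apply] at this
  linarith

section Increments

variable {a ζ₀ : ℝ} {y : ℝ → ℝ}

lemma neg_mul_exp_le_and_pos_of_lt (ha : a < 0)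
    (hlow : ∀ ζ₁ ζ₂, ζ₀ ≤ ζ₁ → ζ₁ ≤ ζ₂ →
      3 * a / 2 * (exp (-ζ₁) - exp (-ζ₂)) ≤ expRescale y ζ₂ - expRescale y ζ₁)
    (hy₀ : -4 * a * exp (ζ₀ / 2) < y ζ₀) {ζ : ℝ} (hζ : ζ₀ ≤ ζ) :
    -a * exp ((3 / 2) * ζ - ζ₀) ≤ y ζ ∧ 0 < y ζ := by
  have hg₀ : -4 * a * exp (-ζ₀) < expRescale y ζ₀ := by
    rwa [lt_expRescale_iff, mul_assoc, ← exp_div_two_eq_exp_neg_mul_exp]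
  have hg : -a * exp (-ζ₀) ≤ expRescale y ζ := by
    nlinarith [hlow ζ₀ ζ le_rfl hζ, exp_pos (-ζ), exp_pos (-ζ₀)]
  have hy : -a * exp (-ζ₀) * exp ((3 / 2) * ζ) ≤ y ζ := le_expRescale_iff.1 hg
  have hexp : exp ((3 / 2) * ζ - ζ₀) = exp (-ζ₀) * exp ((3 / 2) * ζ) := by
    rw [← exp_add]
    ring_nf
  refine ⟨by rwa [hexp, ← mul_assoc], lt_of_lt_of_le ?_ hy⟩
  exact mul_pos (mul_pos (neg_pos.2 ha) (exp_pos _)) (exp_pos _)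

lemma le_and_nonpos_of_nonpos (ha : a ≤ 0)
    (hup : ∀ ζ₁ ζ₂, ζ₀ ≤ ζ₁ → ζ₁ ≤ ζ₂ →
      expRescale y ζ₂ - expRescale y ζ₁ ≤ a / 2 * (exp (-ζ₁) - exp (-ζ₂)))
    {ζ₁ ζ : ℝ} (hζ₁ : ζ₀ ≤ ζ₁) (hy₁ : y ζ₁ ≤ 0) (hζ : ζ₁ ≤ ζ) :
    y ζ ≤ a / 2 * (exp (-ζ₁) - exp (-ζ)) * exp ((3 / 2) * ζ) ∧ y ζ ≤ 0 := by
  have hg₁ : expRescale y ζ₁ ≤ 0 := expRescale_le_iff.2 (by rwa [zero_mul])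
  have hg : expRescale y ζ ≤ a / 2 * (exp (-ζ₁) - exp (-ζ)) := by
    linarith [hup ζ₁ ζ hζ₁ hζ]
  have hdrop : a / 2 * (exp (-ζ₁) - exp (-ζ)) ≤ 0 :=
    mul_nonpos_of_nonpos_of_nonneg (by linarith) (sub_nonneg.2 (exp_le_exp.2 (neg_le_neg hζ)))
  exact ⟨expRescale_le_iff.1 hg, by simpa using expRescale_le_iff.1 (hg.trans hdrop)⟩

lemma exists_zero_of_nonneg_of_le
    (hcont : ContinuousOn y (Ici ζ₀))
    (hup : ∀ ζ₁ ζ₂, ζ₀ ≤ ζ₁ → ζ₁ ≤ ζ₂ →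
      expRescale y ζ₂ - expRescale y ζ₁ ≤ a / 2 * (exp (-ζ₁) - exp (-ζ₂)))
    (hy₀ : 0 ≤ y ζ₀) (hy₀' : y ζ₀ ≤ -(a / 4) * exp (ζ₀ / 2)) :
    ∃ ζs, ζ₀ ≤ ζs ∧ y ζs = 0 := by
  -- by `ζ₀ + log 2` the rescaled solution has dropped by at least `|a|/4 ⋅ e^{-ζ₀}`, its maximal initial value
  set ζ₁ := ζ₀ + log 2
  have hζ₁ : ζ₀ ≤ ζ₁ := le_add_of_nonneg_right (log_nonneg one_le_two)
  have hexp₁ : exp (-ζ₁) = exp (-ζ₀) / 2 := by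
    rw [neg_add, exp_add, exp_neg (log 2), exp_log two_pos, div_eq_mul_inv]
  have hg₀ : expRescale y ζ₀ ≤ -(a / 4) * exp (-ζ₀) := by
    rwa [expRescale_le_iff, mul_assoc, ← exp_div_two_eq_exp_neg_mul_exp]
  have hg₁ : expRescale y ζ₁ ≤ 0 := by
    have hinc := hup ζ₀ ζ₁ le_rfl hζ₁
    rw [hexp₁] at hinc
    linarith
  have hcont' : ContinuousOn (expRescale y) (Icc ζ₀ ζ₁) :=
    (hcont.mono Icc_subset_Ici_self).mul (by fun_prop)
  obtain ⟨ζs, hζs, hgs⟩ := intermediate_value_Icc' hζ₁ hcont'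
    ⟨hg₁, (mul_nonneg_iff_of_pos_right (exp_pos _)).2 hy₀⟩
  exact ⟨ζs, hζs.1, by rw [← expRescale_mul_exp y ζs, hgs, zero_mul]⟩

lemma bounds_of_le_of_eq_zero (ha : a ≤ 0)
    (hup : ∀ ζ₁ ζ₂, ζ₀ ≤ ζ₁ → ζ₁ ≤ ζ₂ →
      expRescale y ζ₂ - expRescale y ζ₁ ≤ a / 2 * (exp (-ζ₁) - exp (-ζ₂)))
    (hlow : ∀ ζ₁ ζ₂, ζ₀ ≤ ζ₁ → ζ₁ ≤ ζ₂ →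
      3 * a / 2 * (exp (-ζ₁) - exp (-ζ₂)) ≤ expRescale y ζ₂ - expRescale y ζ₁)
    {ζs ζ : ℝ} (hys : y ζs = 0) (hζ₀ : ζ₀ ≤ ζ) (hζ : ζ ≤ ζs) :
    0 ≤ y ζ ∧
      -(a / 2) * (exp (-ζ) - exp (-ζs)) * exp ((3 / 2) * ζ) ≤ y ζ ∧
      y ζ ≤ -(3 / 2) * a * (exp (-ζ) - exp (-ζs)) * exp ((3 / 2) * ζ) := by
  have hgs : expRescale y ζs = 0 := by rw [expRescale, hys, zero_mul]
  have hlo : -(a / 2) * (exp (-ζ) - exp (-ζs)) ≤ expRescale y ζ := by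
    linarith [hup ζ ζs hζ₀ hζ]
  have hhi : expRescale y ζ ≤ -(3 / 2) * a * (exp (-ζ) - exp (-ζs)) := by
    linarith [hlow ζ ζs hζ₀ hζ]
  have hpos : 0 ≤ -(a / 2) * (exp (-ζ) - exp (-ζs)) :=
    mul_nonneg (by linarith) (sub_nonneg.2 (exp_le_exp.2 (neg_le_neg hζ)))
  exact ⟨by simpa using le_expRescale_iff.1 (hpos.trans hlo), le_expRescale_iff.1 hlo,
    expRescale_le_iff.1 hhi⟩

end Increments

theorem stmt_9_general (a ζ₀ y₀ : ℝ) (ha : a < 0)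
    (h y : ℝ → ℝ)
    (hh : ∀ ζ ∈ Set.Ici ζ₀, |h ζ - a| ≤ |a| / 2)
    (hy : ∀ ζ ∈ Set.Ici ζ₀,
      HasDerivWithinAt y ((3 / 2) * y ζ + Real.exp (ζ / 2) * h ζ) (Set.Ici ζ₀) ζ)
    (hy0 : y ζ₀ = y₀) :
    -- Case 1
    (-4 * a * Real.exp (ζ₀ / 2) < y₀ →
      ∀ ζ ∈ Set.Ici ζ₀, -a * Real.exp ((3 / 2) * ζ - ζ₀) ≤ y ζ ∧ 0 < y ζ) ∧
    -- Case 2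
    (0 ≤ y₀ → y₀ ≤ -(a / 4) * Real.exp (ζ₀ / 2) →
      ∃ ζs, ζ₀ ≤ ζs ∧ y ζs = 0 ∧
        (∀ ζ, ζ₀ ≤ ζ → ζ ≤ ζs →
          0 ≤ y ζ ∧
          -(a / 2) * (Real.exp (-ζ) - Real.exp (-ζs)) * Real.exp ((3 / 2) * ζ) ≤ y ζ ∧
          y ζ ≤ -(3 / 2) * a * (Real.exp (-ζ) - Real.exp (-ζs)) * Real.exp ((3 / 2) * ζ)) ∧
        (∀ ζ, ζs ≤ ζ →
          y ζ ≤ (a / 2) * (Real.exp (-ζs) - Real.exp (-ζ)) * Real.exp ((3 / 2) * ζ) ∧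
          y ζ ≤ 0)) ∧
    -- Case 3
    (y₀ ≤ 0 →
      ∀ ζ ∈ Set.Ici ζ₀,
        y ζ ≤ (a / 2) * (Real.exp (-ζ₀) - Real.exp (-ζ)) * Real.exp ((3 / 2) * ζ) ∧
        y ζ ≤ 0) := by
  subst hy0
  have hh_bounds (ζ : ℝ) (hζ : ζ ∈ Ici ζ₀) : 3 * a / 2 ≤ h ζ ∧ h ζ ≤ a / 2 := by
    have := abs_le.1 (hh ζ hζ)
    rw [abs_of_neg ha] at this
    constructor <;> linarith
  have hg (ζ : ℝ) (hζ : ζ ∈ Ici ζ₀) := hasDerivWithinAt_expRescale (hy ζ hζ)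
  have hup (ζ₁ ζ₂ : ℝ) (hζ₁ : ζ₀ ≤ ζ₁) (hζ₁₂ : ζ₁ ≤ ζ₂) :=
    sub_le_of_hasDerivWithinAt_exp_neg_mul hg (fun ζ hζ ↦ (hh_bounds ζ hζ).2) hζ₁ hζ₁₂
  have hlow (ζ₁ ζ₂ : ℝ) (hζ₁ : ζ₀ ≤ ζ₁) (hζ₁₂ : ζ₁ ≤ ζ₂) :=
    le_sub_of_hasDerivWithinAt_exp_neg_mul hg (fun ζ hζ ↦ (hh_bounds ζ hζ).1) hζ₁ hζ₁₂
  have hcont : ContinuousOn y (Ici ζ₀) := fun ζ hζ ↦ (hy ζ hζ).continuousWithinAt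
  refine ⟨fun hy₀ ζ hζ ↦ neg_mul_exp_le_and_pos_of_lt ha hlow hy₀ hζ, fun hy₀ hy₀' ↦ ?_,
    fun hy₀ ζ hζ ↦ le_and_nonpos_of_nonpos ha.le hup le_rfl hy₀ hζ⟩
  obtain ⟨ζs, hζs, hys⟩ := exists_zero_of_nonneg_of_le hcont hup hy₀ hy₀'
  exact ⟨ζs, hζs, hys, fun ζ hζ₀ hζ ↦ bounds_of_le_of_eq_zero ha.le hup hlow hys hζ₀ hζ,
    fun ζ hζ ↦ le_and_nonpos_of_nonpos ha.le hup hζs hys.le hζ⟩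

/-- Lemma 7.2 (Cases 1–3) in self-contained ODE form: forward characteristics
`y' = (3/2)y + e^{ζ/2}h(ζ)` with `a < 0` and `|h − a| ≤ |a|/2`. -/
theorem stmt_9 (a ζ₀ y₀ : ℝ) (ha : a < 0)
    (h y : ℝ → ℝ)
    (hcont : ContinuousOn h (Set.Ici ζ₀))
    (hh : ∀ ζ ∈ Set.Ici ζ₀, |h ζ - a| ≤ |a| / 2)
    (hy : ∀ ζ ∈ Set.Ici ζ₀,
      HasDerivWithinAt y ((3 / 2) * y ζ + Real.exp (ζ / 2) * h ζ) (Set.Ici ζ₀) ζ)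
    (hy0 : y ζ₀ = y₀) :
    -- Case 1
    (-4 * a * Real.exp (ζ₀ / 2) < y₀ →
      ∀ ζ ∈ Set.Ici ζ₀, -a * Real.exp ((3 / 2) * ζ - ζ₀) ≤ y ζ ∧ 0 < y ζ) ∧
    -- Case 2
    (0 ≤ y₀ → y₀ ≤ -(a / 4) * Real.exp (ζ₀ / 2) →
      ∃ ζs, ζ₀ ≤ ζs ∧ y ζs = 0 ∧
        (∀ ζ, ζ₀ ≤ ζ → ζ ≤ ζs →
          0 ≤ y ζ ∧
          -(a / 2) * (Real.exp (-ζ) - Real.exp (-ζs)) * Real.exp ((3 / 2) * ζ) ≤ y ζ ∧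
          y ζ ≤ -(3 / 2) * a * (Real.exp (-ζ) - Real.exp (-ζs)) * Real.exp ((3 / 2) * ζ)) ∧
        (∀ ζ, ζs ≤ ζ →
          y ζ ≤ (a / 2) * (Real.exp (-ζs) - Real.exp (-ζ)) * Real.exp ((3 / 2) * ζ) ∧
          y ζ ≤ 0)) ∧
    -- Case 3
    (y₀ ≤ 0 →
      ∀ ζ ∈ Set.Ici ζ₀,
        y ζ ≤ (a / 2) * (Real.exp (-ζ₀) - Real.exp (-ζ)) * Real.exp ((3 / 2) * ζ) ∧
        y ζ ≤ 0) :=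
  stmt_9_general a ζ₀ y₀ ha h y hh hy hy0
end

section
/- Let a ≠ 0, 0 < κ < 1, c₀ > 0, ζ₀ ∈ ℝ and ζ* ≥ ζ₀. Suppose y : [ζ₀,∞) → ℝ is a (measurable) function satisfying |y(ζ)| ≥ (|a|/2)|e^{−ζ} − e^{−ζ*}| e^{(3/2)ζ} for all ζ ≥ ζ₀, and suppose 𝒟 : ℝ × [ζ₀,∞) → ℝ satisfies |𝒟(z,ζ)| ≤ c₀ (1+z²)^{−κ/2} for all z ∈ ℝ and ζ ≥ ζ₀. Then ∫_{ζ₀}^{∞} |𝒟(y(ζ),ζ)| dζ ≤ (16 c₀ / (κ(1−κ)|a|^{κ})) e^{−κζ₀/2}. -/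
/-!
Along the characteristic, `|e^{-ζ} - e^{-ζ*}| e^{3ζ/2} = e^{ζ/2} |e^{ζ-ζ*} - 1|` and
`|e^s - 1| ≥ min(|s|, 1)/2`, so `|y(ζ)| ≥ (|a|/4) e^{ζ/2} min(|ζ - ζ*|, 1)`. Hence
`|𝒟(y(ζ), ζ)| ≤ c₀ |y(ζ)|^{-κ}` is dominated, for `ζ ≠ ζ*`, by `c₀ (|a|/4)^{-κ}` times the
sum of the exponentially decaying `e^{-κζ/2}` and the integrable singularity
`e^{-κζ₀/2} |ζ - ζ*|^{-κ}` cut off to `|ζ - ζ*| < 1`, whose integrals over `(ζ₀, ∞)` are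
`(2/κ) e^{-κζ₀/2}` and at most `(2/(1-κ)) e^{-κζ₀/2}`.
-/

open MeasureTheory Real Set

lemma min_abs_one_div_two_le_abs_exp_sub_one (s : ℝ) : min |s| 1 / 2 ≤ |exp s - 1| := by
  rcases le_or_gt 0 s with hs | hs
  · rw [abs_of_nonneg hs, abs_of_nonneg (by linarith [add_one_le_exp s])]
    linarith [add_one_le_exp s, min_le_left s 1]
  · have hexp : exp s * (1 - s) ≤ 1 := by
      calc exp s * (1 - s) ≤ exp s * exp (-s) := by gcongr; linarith [add_one_le_exp (-s)]
        _ = 1 := by rw [← exp_add, add_neg_cancel, exp_zero]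
    rw [abs_of_neg hs, abs_of_neg (by simpa using exp_lt_one_iff.mpr hs)]
    rcases le_or_gt (-s) 1 with hs1 | hs1
    · rw [min_eq_left hs1]
      nlinarith [exp_pos s]
    · rw [min_eq_right hs1.le]
      nlinarith [exp_pos s]

lemma exp_half_mul_min_le_abs_exp_neg_sub_exp_neg_mul (ζ ζs : ℝ) :
    exp (ζ / 2) * (min |ζ - ζs| 1 / 2) ≤ |exp (-ζ) - exp (-ζs)| * exp ((3 / 2) * ζ) := by
  have hfactor :
      |exp (-ζ) - exp (-ζs)| * exp ((3 / 2) * ζ) = exp (ζ / 2) * |exp (ζ - ζs) - 1| := by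
    have h :
        (exp (-ζ) - exp (-ζs)) * exp ((3 / 2) * ζ) = exp (ζ / 2) * (1 - exp (ζ - ζs)) := by
      simp only [sub_mul, mul_sub, ← exp_add, mul_one]
      ring_nf
    rw [← abs_of_pos (exp_pos ((3 / 2) * ζ)), ← abs_mul, h, abs_mul, abs_of_pos (exp_pos _),
      abs_sub_comm]
  rw [hfactor]
  exact mul_le_mul_of_nonneg_left (min_abs_one_div_two_le_abs_exp_sub_one _) (exp_pos _).le

lemma one_add_sq_rpow_neg_half_le {b z κ : ℝ} (hb : 0 < b) (hbz : b ≤ |z|) (hκ : 0 ≤ κ) :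
    (1 + z ^ 2) ^ (-(κ / 2)) ≤ b ^ (-κ) := by
  have hsq : b ^ 2 ≤ 1 + z ^ 2 := by nlinarith [sq_abs z]
  calc (1 + z ^ 2) ^ (-(κ / 2)) ≤ (b ^ 2) ^ (-(κ / 2)) :=
        rpow_le_rpow_of_nonpos (by positivity) hsq (by linarith)
    _ = b ^ (-κ) := by rw [← rpow_natCast, ← rpow_mul hb.le]; ring_nf

noncomputable def cutoffAbsRpowNeg (κ t : ℝ) : ℝ := (Iio 1).indicator (fun x => x ^ (-κ)) |t|

lemma cutoffAbsRpowNeg_nonneg (κ t : ℝ) : 0 ≤ cutoffAbsRpowNeg κ t := by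
  unfold cutoffAbsRpowNeg
  rw [indicator_apply]
  split_ifs <;> positivity

lemma integral_cutoffAbsRpowNeg {κ : ℝ} (hκ : κ < 1) :
    ∫ t, cutoffAbsRpowNeg κ t = 2 / (1 - κ) := by
  have hIoo : ∫ x in Ioo (0 : ℝ) 1, x ^ (-κ) = 1 / (1 - κ) := by
    rw [← integral_Ioc_eq_integral_Ioo, ← intervalIntegral.integral_of_le zero_le_one,
      integral_rpow (Or.inl (by linarith)), one_rpow, zero_rpow (by linarith)]
    ring
  unfold cutoffAbsRpowNeg
  rw [integral_comp_abs (f := (Iio 1).indicator fun x => x ^ (-κ)),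
    integral_indicator measurableSet_Iio, Measure.restrict_restrict measurableSet_Iio,
    Iio_inter_Ioi, hIoo]
  ring

lemma integrable_cutoffAbsRpowNeg {κ : ℝ} (hκ : κ < 1) : Integrable (cutoffAbsRpowNeg κ) :=
  Integrable.of_integral_ne_zero <| by
    rw [integral_cutoffAbsRpowNeg hκ]; exact (div_pos two_pos (by linarith)).ne'

lemma min_abs_one_rpow_neg_le_one_add (κ t : ℝ) :
    min |t| 1 ^ (-κ) ≤ 1 + cutoffAbsRpowNeg κ t := by
  rcases lt_or_ge |t| 1 with ht | ht
  · rw [min_eq_left ht.le, cutoffAbsRpowNeg, indicator_of_mem (show |t| ∈ Iio 1 from ht)]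
    linarith
  · rw [min_eq_right ht, one_rpow]
    linarith [cutoffAbsRpowNeg_nonneg κ t]

lemma integral_Ioi_exp_neg_mul {b : ℝ} (hb : 0 < b) (c : ℝ) :
    ∫ x in Ioi c, exp (-b * x) = exp (-b * c) / b := by
  rw [integral_exp_mul_Ioi (by linarith) c]
  field_simp

lemma integrableOn_exp_add_cutoffAbsRpowNeg {κ : ℝ} (hκ0 : 0 < κ) (hκ1 : κ < 1) (ζ₀ ζs : ℝ) :
    IntegrableOn
      (fun ζ => exp (-(κ / 2) * ζ) + exp (-(κ / 2) * ζ₀) * cutoffAbsRpowNeg κ (ζ - ζs))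
      (Ioi ζ₀) :=
  (exp_neg_integrableOn_Ioi ζ₀ (half_pos hκ0)).add
    (((integrable_cutoffAbsRpowNeg hκ1).comp_sub_right ζs).integrableOn.const_mul _)

lemma setIntegral_exp_add_cutoffAbsRpowNeg_le {κ : ℝ} (hκ0 : 0 < κ) (hκ1 : κ < 1) (ζ₀ ζs : ℝ) :
    ∫ ζ in Ioi ζ₀, (exp (-(κ / 2) * ζ) + exp (-(κ / 2) * ζ₀) * cutoffAbsRpowNeg κ (ζ - ζs))
      ≤ exp (-(κ / 2) * ζ₀) * (2 / κ + 2 / (1 - κ)) := by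
  have hK : Integrable fun ζ => cutoffAbsRpowNeg κ (ζ - ζs) :=
    (integrable_cutoffAbsRpowNeg hκ1).comp_sub_right ζs
  have hcut : ∫ ζ in Ioi ζ₀, cutoffAbsRpowNeg κ (ζ - ζs) ≤ 2 / (1 - κ) :=
    calc _ ≤ ∫ ζ, cutoffAbsRpowNeg κ (ζ - ζs) :=
          setIntegral_le_integral hK (ae_of_all _ fun _ => cutoffAbsRpowNeg_nonneg _ _)
      _ = 2 / (1 - κ) := by
          rw [integral_sub_right_eq_self (cutoffAbsRpowNeg κ), integral_cutoffAbsRpowNeg hκ1]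
  rw [integral_add (exp_neg_integrableOn_Ioi ζ₀ (half_pos hκ0)) (hK.integrableOn.const_mul _),
    integral_const_mul, integral_Ioi_exp_neg_mul (half_pos hκ0)]
  linarith [mul_le_mul_of_nonneg_left hcut (exp_pos (-(κ / 2) * ζ₀)).le,
    show exp (-(κ / 2) * ζ₀) / (κ / 2) = exp (-(κ / 2) * ζ₀) * (2 / κ) by ring]

lemma abs_le_of_characteristic_lower_bound {a κ c₀ ζ₀ ζs ζ Y Dv : ℝ} (ha : a ≠ 0) (hκ : 0 ≤ κ)
    (hc₀ : 0 ≤ c₀) (hζ : ζ₀ ≤ ζ) (hne : ζ ≠ ζs)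
    (hY : |a| / 2 * |exp (-ζ) - exp (-ζs)| * exp ((3 / 2) * ζ) ≤ |Y|)
    (hD : |Dv| ≤ c₀ * (1 + Y ^ 2) ^ (-(κ / 2))) :
    |Dv| ≤ c₀ * (|a| / 4) ^ (-κ) *
      (exp (-(κ / 2) * ζ) + exp (-(κ / 2) * ζ₀) * cutoffAbsRpowNeg κ (ζ - ζs)) := by
  set m := min |ζ - ζs| 1
  have hm : 0 < m := lt_min (abs_pos.mpr (sub_ne_zero.mpr hne)) one_pos
  have hYlow : |a| / 4 * exp (ζ / 2) * m ≤ |Y| :=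
    calc |a| / 4 * exp (ζ / 2) * m = |a| / 2 * (exp (ζ / 2) * (m / 2)) := by ring
      _ ≤ |a| / 2 * (|exp (-ζ) - exp (-ζs)| * exp ((3 / 2) * ζ)) := by
        gcongr ?_ * ?_
        exact exp_half_mul_min_le_abs_exp_neg_sub_exp_neg_mul ζ ζs
      _ ≤ |Y| := by rwa [← mul_assoc]
  have hsplit : (|a| / 4 * exp (ζ / 2) * m) ^ (-κ)
      = (|a| / 4) ^ (-κ) * (exp (-(κ / 2) * ζ) * m ^ (-κ)) := by
    rw [mul_rpow (by positivity) hm.le, mul_rpow (by positivity) (exp_pos _).le, ← exp_mul]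
    ring_nf
  have hexp : exp (-(κ / 2) * ζ) ≤ exp (-(κ / 2) * ζ₀) := exp_le_exp.mpr (by nlinarith)
  have hK := cutoffAbsRpowNeg_nonneg κ (ζ - ζs)
  calc |Dv| ≤ c₀ * (|a| / 4 * exp (ζ / 2) * m) ^ (-κ) :=
        hD.trans (by gcongr; exact one_add_sq_rpow_neg_half_le (by positivity) hYlow hκ)
    _ = c₀ * (|a| / 4) ^ (-κ) * (exp (-(κ / 2) * ζ) * m ^ (-κ)) := by rw [hsplit]; ring
    _ ≤ c₀ * (|a| / 4) ^ (-κ) * (exp (-(κ / 2) * ζ) * (1 + cutoffAbsRpowNeg κ (ζ - ζs))) := by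
        gcongr; exact min_abs_one_rpow_neg_le_one_add κ _
    _ ≤ _ := by rw [mul_one_add]; gcongr

lemma div_four_rpow_neg_le {b κ : ℝ} (hb : 0 < b) (hκ : κ ≤ 1) : (b / 4) ^ (-κ) ≤ 4 / b ^ κ := by
  rw [rpow_neg (by positivity), div_rpow hb.le (by norm_num), inv_div]
  gcongr
  calc (4 : ℝ) ^ κ ≤ 4 ^ (1 : ℝ) := rpow_le_rpow_of_exponent_le (by norm_num) hκ
    _ = 4 := rpow_one 4

theorem stmt_10_general (a κ c₀ ζ₀ ζs : ℝ) (ha : a ≠ 0) (hκ0 : 0 < κ) (hκ1 : κ < 1)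
    (hc₀ : 0 < c₀) (y : ℝ → ℝ)
    (hy : ∀ ζ ∈ Set.Ici ζ₀,
      |a| / 2 * |Real.exp (-ζ) - Real.exp (-ζs)| * Real.exp ((3 / 2) * ζ) ≤ |y ζ|)
    (D : ℝ → ℝ → ℝ)
    (hD : ∀ z : ℝ, ∀ ζ ∈ Set.Ici ζ₀, |D z ζ| ≤ c₀ * (1 + z ^ 2) ^ (-(κ / 2))) :
    ∫ ζ in Set.Ioi ζ₀, |D (y ζ) ζ| ≤
      16 * c₀ / (κ * (1 - κ) * |a| ^ κ) * Real.exp (-(κ * ζ₀) / 2) := by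
  have hbound : ∀ᵐ ζ ∂volume.restrict (Ioi ζ₀), |D (y ζ) ζ| ≤ c₀ * (|a| / 4) ^ (-κ) *
      (exp (-(κ / 2) * ζ) + exp (-(κ / 2) * ζ₀) * cutoffAbsRpowNeg κ (ζ - ζs)) := by
    filter_upwards [ae_restrict_mem measurableSet_Ioi,
      ae_restrict_of_ae (Measure.ae_ne volume ζs)] with ζ hζ hne
    have hζ' : ζ ∈ Ici ζ₀ := Ioi_subset_Ici_self hζ
    exact abs_le_of_characteristic_lower_bound ha hκ0.le hc₀.le hζ' hne (hy ζ hζ') (hD _ ζ hζ')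
  have h1κ : 0 < 1 - κ := by linarith
  calc ∫ ζ in Ioi ζ₀, |D (y ζ) ζ|
      ≤ c₀ * (|a| / 4) ^ (-κ) * ∫ ζ in Ioi ζ₀,
          (exp (-(κ / 2) * ζ) + exp (-(κ / 2) * ζ₀) * cutoffAbsRpowNeg κ (ζ - ζs)) := by
        rw [← integral_const_mul]
        exact integral_mono_of_nonneg (ae_of_all _ fun _ => abs_nonneg _)
          ((integrableOn_exp_add_cutoffAbsRpowNeg hκ0 hκ1 ζ₀ ζs).const_mul _) hbound
    _ ≤ c₀ * (4 / |a| ^ κ) * (exp (-(κ / 2) * ζ₀) * (2 / κ + 2 / (1 - κ))) := by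
        gcongr
        · exact setIntegral_nonneg measurableSet_Ioi fun ζ _ =>
            add_nonneg (exp_pos _).le (mul_nonneg (exp_pos _).le (cutoffAbsRpowNeg_nonneg _ _))
        · exact div_four_rpow_neg_le (abs_pos.mpr ha) hκ1.le
        · exact setIntegral_exp_add_cutoffAbsRpowNeg_le hκ0 hκ1 ζ₀ ζs
    _ = 8 * c₀ / (κ * (1 - κ) * |a| ^ κ) * exp (-(κ * ζ₀) / 2) := by
        rw [show -(κ * ζ₀) / 2 = -(κ / 2) * ζ₀ by ring]
        field_simp
        ring
    _ ≤ 16 * c₀ / (κ * (1 - κ) * |a| ^ κ) * exp (-(κ * ζ₀) / 2) := by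
        gcongr
        norm_num

/-- Lemma 7.3: if `|y(ζ)| ≥ (|a|/2)|e^{−ζ} − e^{−ζ*}|e^{(3/2)ζ}` and
`|𝒟(z,ζ)| ≤ c₀(1+z²)^{−κ/2}` with `0 < κ < 1`, then
`∫_{ζ₀}^{∞} |𝒟(y(ζ),ζ)| dζ ≤ (16c₀/(κ(1−κ)|a|^κ)) e^{−κζ₀/2}`. -/
theorem stmt_10 (a κ c₀ ζ₀ ζs : ℝ) (ha : a ≠ 0) (hκ0 : 0 < κ) (hκ1 : κ < 1)
    (hc₀ : 0 < c₀) (hζs : ζ₀ ≤ ζs)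
    (y : ℝ → ℝ) (hymeas : Measurable y)
    (hy : ∀ ζ ∈ Set.Ici ζ₀,
      |a| / 2 * |Real.exp (-ζ) - Real.exp (-ζs)| * Real.exp ((3 / 2) * ζ) ≤ |y ζ|)
    (D : ℝ → ℝ → ℝ)
    (hD : ∀ z : ℝ, ∀ ζ ∈ Set.Ici ζ₀, |D z ζ| ≤ c₀ * (1 + z ^ 2) ^ (-(κ / 2))) :
    ∫ ζ in Set.Ioi ζ₀, |D (y ζ) ζ| ≤
      16 * c₀ / (κ * (1 - κ) * |a| ^ κ) * Real.exp (-(κ * ζ₀) / 2) :=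
  stmt_10_general a κ c₀ ζ₀ ζs ha hκ0 hκ1 hc₀ y hy D hD
end

section
/- Let a ≥ 1, ν ∈ ℝ and ζ₀ ≥ 0. Suppose y : [ζ₀,∞) → ℝ satisfies |y(ζ)| ≥ e^{(3/2)ζ − ζ₀} for all ζ ≥ ζ₀, and h : [ζ₀,∞) → ℝ satisfies |h(ζ)| ≤ 2a for all ζ ≥ ζ₀. Then ∫_{ζ₀}^{∞} | 3ν/(1+y(ζ)²) − (2ν y(ζ)/(1+y(ζ)²)) e^{ζ/2} h(ζ) | dζ ≤ 6|ν| a. -/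
/-!
Write `u = 3ζ/2 - ζ₀`. Since `|y| ≥ eᵘ`, the first term is at most
`3|ν| / y² ≤ 3|ν| e^{2ζ₀ - 3ζ}` and, as `|y| / (1 + y²) ≤ 1 / |y|`, the second is at most
`4|ν| a e^{ζ/2 - u} = 4|ν| a e^{ζ₀ - ζ}`.
Integrating over `(ζ₀, ∞)` gives `|ν| e^{-ζ₀} + 4|ν| a ≤ 6|ν| a`, as `ζ₀ ≥ 0` and `a ≥ 1`.
-/

open MeasureTheory Set Real

theorem integrableOn_exp_sub_mul_Ioi (p : ℝ) {b : ℝ} (hb : 0 < b) (c : ℝ) :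
    IntegrableOn (fun x => exp (p - b * x)) (Ioi c) := by
  have := (integrableOn_exp_mul_Ioi (neg_neg_of_pos hb) c).const_mul (exp p)
  simp only [← exp_add, neg_mul, ← sub_eq_add_neg] at this
  exact this

theorem integral_exp_sub_mul_Ioi (p : ℝ) {b : ℝ} (hb : 0 < b) (c : ℝ) :
    ∫ x in Ioi c, exp (p - b * x) = exp (p - b * c) / b := by
  simp_rw [sub_eq_add_neg, exp_add, ← neg_mul]
  rw [integral_const_mul, integral_exp_mul_Ioi (neg_neg_of_pos hb)]
  field_simp

theorem inv_one_add_sq_le_exp_neg {u y : ℝ} (hy : exp u ≤ |y|) :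
    (1 + y ^ 2)⁻¹ ≤ exp (-(2 * u)) := by
  have hsq : exp u ^ 2 ≤ y ^ 2 := by
    simpa only [sq_abs] using pow_le_pow_left₀ (exp_pos u).le hy 2
  rw [show -(2 * u) = -(u + u) by ring, exp_neg, exp_add, ← sq]
  exact inv_anti₀ (by positivity) (by linarith)

theorem abs_div_one_add_sq_le_exp_neg {u y : ℝ} (hy : exp u ≤ |y|) :
    |y| / (1 + y ^ 2) ≤ exp (-u) := by
  have hy₀ : 0 < |y| := (exp_pos u).trans_le hy
  calc |y| / (1 + y ^ 2) ≤ |y|⁻¹ := by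
        rw [div_le_iff₀ (by positivity), inv_mul_eq_div, le_div_iff₀ hy₀]
        nlinarith [sq_abs y]
    _ ≤ exp (-u) := by rw [exp_neg]; exact inv_anti₀ (exp_pos u) hy

theorem abs_damping_le {ν y h u t A : ℝ} (hy : exp u ≤ |y|) (hh : |h| ≤ A) :
    |3 * ν / (1 + y ^ 2) - 2 * ν * y / (1 + y ^ 2) * exp t * h| ≤
      3 * |ν| * exp (-(2 * u)) + 2 * |ν| * A * exp (t - u) := by
  have hden : 0 < 1 + y ^ 2 := by positivity
  have h₁ : |3 * ν / (1 + y ^ 2)| ≤ 3 * |ν| * exp (-(2 * u)) := by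
    rw [abs_div, abs_mul, abs_of_pos hden, abs_of_pos three_pos, div_eq_mul_inv]
    gcongr
    exact inv_one_add_sq_le_exp_neg hy
  have h₂ : |2 * ν * y / (1 + y ^ 2) * exp t * h| ≤ 2 * |ν| * A * exp (t - u) :=
    calc |2 * ν * y / (1 + y ^ 2) * exp t * h|
        = 2 * |ν| * (|y| / (1 + y ^ 2)) * exp t * |h| := by
          rw [abs_mul, abs_mul, abs_div, abs_mul, abs_mul, abs_of_pos hden, abs_exp, abs_two]
          ring
      _ ≤ 2 * |ν| * exp (-u) * exp t * A := by
          gcongr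
          exact abs_div_one_add_sq_le_exp_neg hy
      _ = 2 * |ν| * A * exp (t - u) := by
          rw [sub_eq_neg_add, exp_add]
          ring
  exact (abs_sub _ _).trans (add_le_add h₁ h₂)

/-- Estimate (vii-25): if `|y(ζ)| ≥ e^{(3/2)ζ−ζ₀}` and `|h| ≤ 2a` with `a ≥ 1`, `ζ₀ ≥ 0`,
then `∫_{ζ₀}^{∞} |3ν/(1+y²) − (2νy/(1+y²))e^{ζ/2}h(ζ)| dζ ≤ 6|ν|a`. -/
theorem stmt_15 (a ν ζ₀ : ℝ) (ha : 1 ≤ a) (hζ₀ : 0 ≤ ζ₀)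
    (y h : ℝ → ℝ)
    (hy : ∀ ζ ∈ Set.Ici ζ₀, Real.exp ((3 / 2) * ζ - ζ₀) ≤ |y ζ|)
    (hh : ∀ ζ ∈ Set.Ici ζ₀, |h ζ| ≤ 2 * a) :
    (∫ ζ in Set.Ioi ζ₀,
        |3 * ν / (1 + y ζ ^ 2) -
          2 * ν * y ζ / (1 + y ζ ^ 2) * Real.exp (ζ / 2) * h ζ|) ≤ 6 * |ν| * a := by
  have hbound : ∀ ζ ∈ Ioi ζ₀,
      |3 * ν / (1 + y ζ ^ 2) - 2 * ν * y ζ / (1 + y ζ ^ 2) * exp (ζ / 2) * h ζ| ≤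
        3 * |ν| * exp (2 * ζ₀ - 3 * ζ) + 2 * |ν| * (2 * a) * exp (ζ₀ - ζ) := by
    intro ζ hζ
    have hζ' : ζ ∈ Ici ζ₀ := Ioi_subset_Ici_self hζ
    rw [show 2 * ζ₀ - 3 * ζ = -(2 * (3 / 2 * ζ - ζ₀)) by ring,
      show ζ₀ - ζ = ζ / 2 - (3 / 2 * ζ - ζ₀) by ring]
    exact abs_damping_le (hy ζ hζ') (hh ζ hζ')
  have hI₁ : IntegrableOn (fun ζ => exp (2 * ζ₀ - 3 * ζ)) (Ioi ζ₀) :=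
    integrableOn_exp_sub_mul_Ioi _ three_pos _
  have hI₂ : IntegrableOn (fun ζ => exp (ζ₀ - ζ)) (Ioi ζ₀) := by
    simpa only [one_mul] using integrableOn_exp_sub_mul_Ioi ζ₀ one_pos ζ₀
  have hJ₂ : ∫ ζ in Ioi ζ₀, exp (ζ₀ - ζ) = 1 := by
    simpa only [one_mul, sub_self, exp_zero, div_one] using
      integral_exp_sub_mul_Ioi ζ₀ one_pos ζ₀
  calc _ ≤ ∫ ζ in Ioi ζ₀,
          (3 * |ν| * exp (2 * ζ₀ - 3 * ζ) + 2 * |ν| * (2 * a) * exp (ζ₀ - ζ)) :=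
        integral_mono_of_nonneg (ae_of_all _ fun _ => abs_nonneg _)
          ((hI₁.const_mul _).add (hI₂.const_mul _))
          ((ae_restrict_iff' measurableSet_Ioi).2 (ae_of_all _ hbound))
    _ = |ν| * exp (-ζ₀) + 4 * |ν| * a := by
        rw [integral_add (hI₁.const_mul _) (hI₂.const_mul _), integral_const_mul,
          integral_const_mul, integral_exp_sub_mul_Ioi _ three_pos, hJ₂,
          show 2 * ζ₀ - 3 * ζ₀ = -ζ₀ by ring]
        ring
    _ ≤ 6 * |ν| * a := by
        have : exp (-ζ₀) ≤ 1 := exp_le_one_iff.2 (neg_nonpos.2 hζ₀)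
        nlinarith [abs_nonneg ν]
end
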